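/- arXiv:2409.08922 — 4 statements merged into one kernel-verified Lean document; each statement's English description precedes it below -/
import Mathlib

section
/- If P : U → GL(n+k, ℝ) is smooth and solves the Pfaff equation dP + ΩP = 0 on a connected open set U, and Q is another smooth solution with Q(x₀) = P(x₀) at some point x₀ ∈ U, then P = Q on U. -/
open Matrix

/-- Partial derivative `∂ᵢ f` of a scalar function on `ℝⁿ`. -/
noncomputable def pd {n : ℕ} (i : Fin n) (f : (Fin n → ℝ) → ℝ) (x : Fin n → ℝ) : ℝ :=
  fderiv ℝ f x (Pi.single i 1)

/-- Entrywise partial derivative of a matrix-valued map. -/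
noncomputable def pdM {n m : ℕ} (i : Fin n) (P : (Fin n → ℝ) → Matrix (Fin m) (Fin m) ℝ)
    (x : Fin n → ℝ) : Matrix (Fin m) (Fin m) ℝ :=
  Matrix.of fun a b => pd i (fun y => P y a b) x

/-- A continuous linear functional vanishing on the standard basis is zero. -/
lemma pd_fderiv_zero {n : ℕ} {f : (Fin n → ℝ) → ℝ} {x : Fin n → ℝ}
    (h : ∀ i, pd i f x = 0) : fderiv ℝ f x = 0 := by
  apply ContinuousLinearMap.ext
  intro v
  have hv : v = ∑ i, v i • (Pi.single i 1 : Fin n → ℝ) := by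
    funext j
    rw [Finset.sum_apply]
    simp [Pi.single_apply]
  rw [hv, map_sum]
  simp only [ContinuousLinearMap.map_smul]
  simp only [pd] at h
  simp [h]

/-- A differentiable function with vanishing derivative on a preconnected open set
is constant. -/
lemma const_of_pd {n : ℕ} {U : Set (Fin n → ℝ)} (hU : IsOpen U) (hconn : IsPreconnected U)
    {f : (Fin n → ℝ) → ℝ}
    (hdiff : ∀ x ∈ U, DifferentiableAt ℝ f x)
    (hz : ∀ x ∈ U, fderiv ℝ f x = 0)
    {x y : Fin n → ℝ} (hx : x ∈ U) (hy : y ∈ U) : f x = f y := by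
  haveI : PreconnectedSpace U := Subtype.preconnectedSpace hconn
  have hlc : IsLocallyConstant (fun z : U => f z) := by
    rw [IsLocallyConstant.iff_exists_open]
    rintro ⟨z, hz'⟩
    obtain ⟨ε, hε, hball⟩ := Metric.isOpen_iff.mp hU z hz'
    refine ⟨Subtype.val ⁻¹' Metric.ball z ε,
      Metric.isOpen_ball.preimage continuous_subtype_val, Metric.mem_ball_self hε, ?_⟩
    rintro ⟨w, hw'⟩ hwb
    exact (convex_ball z ε).is_const_of_fderivWithin_eq_zero
      (fun u hu => (hdiff u (hball hu)).differentiableWithinAt)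
      (fun u hu => by
        rw [fderivWithin_of_isOpen Metric.isOpen_ball hu]; exact hz u (hball hu))
      hwb (Metric.mem_ball_self hε)
  exact hlc.apply_eq_of_preconnectedSpace ⟨x, hx⟩ ⟨y, hy⟩

lemma pd_sum {n : ℕ} {ι : Type*} [Fintype ι] (i : Fin n)
    (f : ι → (Fin n → ℝ) → ℝ) (x : Fin n → ℝ)
    (hf : ∀ j, DifferentiableAt ℝ (f j) x) :
    pd i (fun y => ∑ j, f j y) x = ∑ j, pd i (f j) x := by
  unfold pd
  rw [fderiv_fun_sum (fun j _ => hf j)]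
  simp

lemma pd_mul {n : ℕ} (i : Fin n) {f g : (Fin n → ℝ) → ℝ} {x : Fin n → ℝ}
    (hf : DifferentiableAt ℝ f x) (hg : DifferentiableAt ℝ g x) :
    pd i (fun y => f y * g y) x = pd i f x * g x + f x * pd i g x := by
  unfold pd
  rw [fderiv_fun_mul hf hg]
  simp only [ContinuousLinearMap.add_apply, ContinuousLinearMap.smul_apply, smul_eq_mul]
  ring

lemma pd_eventually_const {n : ℕ} (i : Fin n) {f : (Fin n → ℝ) → ℝ} {x : Fin n → ℝ} {c : ℝ}
    (h : ∀ᶠ y in nhds x, f y = c) : pd i f x = 0 := by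
  unfold pd
  have h' : f =ᶠ[nhds x] fun _ => c := h
  rw [h'.fderiv_eq, fderiv_fun_const]
  simp

lemma pdM_mul {n m : ℕ} (i : Fin n) {A B : (Fin n → ℝ) → Matrix (Fin m) (Fin m) ℝ}
    {x : Fin n → ℝ}
    (hA : ∀ a b, DifferentiableAt ℝ (fun y => A y a b) x)
    (hB : ∀ a b, DifferentiableAt ℝ (fun y => B y a b) x) :
    pdM i (fun y => A y * B y) x = pdM i A x * B x + A x * pdM i B x := by
  ext a b
  show pd i (fun y => (A y * B y) a b) x = _
  have h1 : (fun y => (A y * B y) a b) = fun y => ∑ c, A y a c * B y c b := by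
    funext y; simp [Matrix.mul_apply]
  rw [h1, pd_sum i (fun c y => A y a c * B y c b) x (fun c => (hA a c).mul (hB c b))]
  have h2 : ∀ c : Fin m, pd i (fun y => A y a c * B y c b) x
      = pd i (fun y => A y a c) x * B x c b + A x a c * pd i (fun y => B y c b) x :=
    fun c => pd_mul i (hA a c) (hB c b)
  simp only [h2, Finset.sum_add_distrib]
  simp [Matrix.add_apply, Matrix.mul_apply, pdM]

lemma diffAt_det {n m : ℕ} {A : (Fin n → ℝ) → Matrix (Fin m) (Fin m) ℝ} {x : Fin n → ℝ}
    (h : ∀ a b, DifferentiableAt ℝ (fun y => A y a b) x) :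
    DifferentiableAt ℝ (fun y => (A y).det) x := by
  simp only [Matrix.det_apply]
  apply DifferentiableAt.fun_sum
  intro σ _
  simp only [Units.smul_def, zsmul_eq_mul]
  have hp : DifferentiableAt ℝ (fun y => ∏ j, A y (σ j) j) x :=
    (HasFDerivAt.finset_prod
      (fun j (_ : j ∈ Finset.univ) => (h (σ j) j).hasFDerivAt)).differentiableAt
  exact hp.const_mul _

lemma diffAt_adj {n m : ℕ} {A : (Fin n → ℝ) → Matrix (Fin m) (Fin m) ℝ} {x : Fin n → ℝ}
    (h : ∀ a b, DifferentiableAt ℝ (fun y => A y a b) x) (a b : Fin m) :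
    DifferentiableAt ℝ (fun y => (A y).adjugate a b) x := by
  simp only [Matrix.adjugate_apply]
  apply diffAt_det
  intro c d
  simp only [Matrix.updateRow_apply]
  rcases eq_or_ne c b with hc | hc
  · simp [hc]
  · simp only [hc, if_false]
    exact h c d

lemma diffAt_inv {n m : ℕ} {A : (Fin n → ℝ) → Matrix (Fin m) (Fin m) ℝ} {x : Fin n → ℝ}
    (h : ∀ a b, DifferentiableAt ℝ (fun y => A y a b) x)
    (hdet : (A x).det ≠ 0) (a b : Fin m) :
    DifferentiableAt ℝ (fun y => (A y)⁻¹ a b) x := by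
  have heq : (fun y => (A y)⁻¹ a b) = fun y => ((A y).det)⁻¹ * (A y).adjugate a b := by
    funext y
    rw [Matrix.inv_def, Ring.inverse_eq_inv', Matrix.smul_apply, smul_eq_mul]
  rw [heq]
  exact ((diffAt_det h).inv hdet).mul (diffAt_adj h a b)

/-- **Uniqueness for the Pfaff system.**  If `P : U → GL(n+k,ℝ)` is smooth and solves
the Pfaff equation `dP + ΩP = 0` on a connected open set `U ⊆ ℝⁿ`, and `Q` is another
smooth solution with `Q(x₀) = P(x₀)` at some point `x₀ ∈ U`, then `P = Q` on `U`. -/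
theorem stmt_2 (n k : ℕ) (U : Set (Fin n → ℝ)) (hU : IsOpen U) (hUconn : IsConnected U)
    (Ω : (Fin n → ℝ) → Fin n → Matrix (Fin (n + k)) (Fin (n + k)) ℝ)
    (hΩsmooth : ∀ i a b, ContDiffOn ℝ (⊤ : ℕ∞) (fun y => Ω y i a b) U)
    (P Q : (Fin n → ℝ) → Matrix (Fin (n + k)) (Fin (n + k)) ℝ)
    (hPsmooth : ∀ a b, ContDiffOn ℝ (⊤ : ℕ∞) (fun y => P y a b) U)
    (hQsmooth : ∀ a b, ContDiffOn ℝ (⊤ : ℕ∞) (fun y => Q y a b) U)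
    (hPGL : ∀ x ∈ U, IsUnit (P x))
    (hP : ∀ x ∈ U, ∀ i, pdM i P x + Ω x i * P x = 0)
    (hQ : ∀ x ∈ U, ∀ i, pdM i Q x + Ω x i * Q x = 0)
    (x₀ : Fin n → ℝ) (hx₀ : x₀ ∈ U) (hPQ : P x₀ = Q x₀) :
    Set.EqOn P Q U := by
  have hPdiff : ∀ x ∈ U, ∀ a b, DifferentiableAt ℝ (fun y => P y a b) x := fun x hx a b =>
    ((hPsmooth a b).differentiableOn (by simp)).differentiableAt (hU.mem_nhds hx)
  have hQdiff : ∀ x ∈ U, ∀ a b, DifferentiableAt ℝ (fun y => Q y a b) x := fun x hx a b =>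
    ((hQsmooth a b).differentiableOn (by simp)).differentiableAt (hU.mem_nhds hx)
  have hunit : ∀ x ∈ U, IsUnit (P x).det := fun x hx =>
    (Matrix.isUnit_iff_isUnit_det _).mp (hPGL x hx)
  have hdetne : ∀ x ∈ U, (P x).det ≠ 0 := fun x hx => (hunit x hx).ne_zero
  have hPinvP : ∀ x ∈ U, (P x)⁻¹ * P x = 1 := fun x hx =>
    Matrix.nonsing_inv_mul _ (hunit x hx)
  have hPPinv : ∀ x ∈ U, P x * (P x)⁻¹ = 1 := fun x hx =>
    Matrix.mul_nonsing_inv _ (hunit x hx)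
  have hPinvdiff : ∀ x ∈ U, ∀ a b, DifferentiableAt ℝ (fun y => (P y)⁻¹ a b) x :=
    fun x hx a b => diffAt_inv (hPdiff x hx) (hdetne x hx) a b
  -- derivative of P and Q
  have hpdP : ∀ x ∈ U, ∀ i, pdM i P x = -(Ω x i * P x) := fun x hx i =>
    eq_neg_of_add_eq_zero_left (hP x hx i)
  have hpdQ : ∀ x ∈ U, ∀ i, pdM i Q x = -(Ω x i * Q x) := fun x hx i =>
    eq_neg_of_add_eq_zero_left (hQ x hx i)
  -- derivative of P⁻¹
  have hpdPinv : ∀ x ∈ U, ∀ i, pdM i (fun y => (P y)⁻¹) x = (P x)⁻¹ * Ω x i := by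
    intro x hx i
    have h1 : pdM i (fun y => (P y)⁻¹ * P y) x = 0 := by
      ext a b
      show pd i (fun y => ((P y)⁻¹ * P y) a b) x = (0 : Matrix _ _ ℝ) a b
      rw [Matrix.zero_apply]
      apply pd_eventually_const i
      filter_upwards [hU.mem_nhds hx] with y hy
      rw [hPinvP y hy]
    have h2 : pdM i (fun y => (P y)⁻¹ * P y) x
        = pdM i (fun y => (P y)⁻¹) x * P x + (P x)⁻¹ * pdM i P x :=
      pdM_mul i (hPinvdiff x hx) (hPdiff x hx)
    have h3 : pdM i (fun y => (P y)⁻¹) x * P x = (P x)⁻¹ * (Ω x i * P x) := by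
      have := h1.symm.trans h2
      rw [hpdP x hx i] at this
      have h4 : pdM i (fun y => (P y)⁻¹) x * P x = (P x)⁻¹ * (Ω x i * P x) := by
        have := eq_neg_of_add_eq_zero_left this.symm
        rw [this]
        rw [Matrix.mul_neg, neg_neg]
      exact h4
    calc pdM i (fun y => (P y)⁻¹) x
        = pdM i (fun y => (P y)⁻¹) x * (P x * (P x)⁻¹) := by rw [hPPinv x hx, Matrix.mul_one]
      _ = (pdM i (fun y => (P y)⁻¹) x * P x) * (P x)⁻¹ := by rw [Matrix.mul_assoc]
      _ = ((P x)⁻¹ * (Ω x i * P x)) * (P x)⁻¹ := by rw [h3]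
      _ = (P x)⁻¹ * Ω x i * (P x * (P x)⁻¹) := by
          simp only [Matrix.mul_assoc]
      _ = (P x)⁻¹ * Ω x i := by rw [hPPinv x hx, Matrix.mul_one]
  -- the ratio R = P⁻¹ Q
  set R : (Fin n → ℝ) → Matrix (Fin (n + k)) (Fin (n + k)) ℝ :=
    fun y => (P y)⁻¹ * Q y with hRdef
  have hRdiff : ∀ x ∈ U, ∀ a b, DifferentiableAt ℝ (fun y => R y a b) x := by
    intro x hx a b
    have heq : (fun y => R y a b) = fun y => ∑ c, (P y)⁻¹ a c * Q y c b := by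
      funext y; simp [hRdef, Matrix.mul_apply]
    rw [heq]
    exact DifferentiableAt.fun_sum fun c _ => (hPinvdiff x hx a c).mul (hQdiff x hx c b)
  have hpdR : ∀ x ∈ U, ∀ i, pdM i R x = 0 := by
    intro x hx i
    have h2 : pdM i R x = pdM i (fun y => (P y)⁻¹) x * Q x + (P x)⁻¹ * pdM i Q x :=
      pdM_mul i (hPinvdiff x hx) (hQdiff x hx)
    rw [h2, hpdPinv x hx i, hpdQ x hx i]
    rw [Matrix.mul_neg, ← Matrix.mul_assoc]
    simp
  have hfz : ∀ a b, ∀ x ∈ U, fderiv ℝ (fun y => R y a b) x = 0 := by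
    intro a b x hx
    apply pd_fderiv_zero
    intro i
    have h := hpdR x hx i
    have : pdM i R x a b = (0 : Matrix _ _ ℝ) a b := by rw [h]
    simpa [pdM] using this
  have hconst : ∀ x ∈ U, R x = R x₀ := by
    intro x hx
    ext a b
    exact const_of_pd hU hUconn.isPreconnected
      (fun z hz => hRdiff z hz a b) (hfz a b) hx hx₀
  have hR0 : R x₀ = 1 := by
    rw [hRdef]
    simp only
    rw [← hPQ, hPinvP x₀ hx₀]
  intro x hx
  have hQx : Q x = P x * R x := by
    rw [hRdef]
    simp only
    rw [← Matrix.mul_assoc, hPPinv x hx, Matrix.one_mul]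
  have := hQx.trans (by rw [hconst x hx, hR0, Matrix.mul_one])
  exact this.symm
end

section
/- For 2 < r < q ≤ n, the weak Morrey space L^{q,n-q}_w(U) embeds continuously into the Morrey space L^{r,n-r}(U) on a bounded domain U ⊆ ℝⁿ; in particular L^{q,n-q}_w(U) ↪ L^{2,n-2}(U) continuously. -/
open MeasureTheory Metric ENNReal NNReal

/-- The weak `L^q` quasinorm of `f` w.r.t. the measure `μ`:
`sup_{t>0} t · μ{|f| > t}^{1/q}`. -/
noncomputable def wLp {α : Type*} [MeasurableSpace α] (q : ℝ) (f : α → ℝ)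
    (μ : Measure α) : ℝ≥0∞ :=
  ⨆ t : NNReal, (t : ℝ≥0∞) * (μ {x | (t : ℝ) < |f x|}) ^ (1 / q)

/-- The Morrey norm `‖f‖_{L^{r,λ}(U)} = sup_{x ∈ U, 0 < ρ ≤ diam U} ρ^{-λ/r} ‖f‖_{L^r(B_ρ(x) ∩ U)}`. -/
noncomputable def morreyNorm {n : ℕ} (r lam : ℝ) (U : Set (Fin n → ℝ))
    (f : (Fin n → ℝ) → ℝ) : ℝ≥0∞ :=
  ⨆ (x : Fin n → ℝ) (_ : x ∈ U) (ρ : {ρ : ℝ // 0 < ρ ∧ ρ ≤ Metric.diam U}),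
    ENNReal.ofReal ((ρ : ℝ) ^ (-(lam / r))) *
      eLpNorm f (ENNReal.ofReal r) (volume.restrict (Metric.ball x ρ ∩ U))

/-- The weak Morrey norm
`‖f‖_{L^{q,λ}_w(U)} = sup_{x ∈ U, 0 < ρ ≤ diam U} ρ^{-λ/q} ‖f‖_{L^q_w(B_ρ(x) ∩ U)}`. -/
noncomputable def weakMorreyNorm {n : ℕ} (q lam : ℝ) (U : Set (Fin n → ℝ))
    (f : (Fin n → ℝ) → ℝ) : ℝ≥0∞ :=
  ⨆ (x : Fin n → ℝ) (_ : x ∈ U) (ρ : {ρ : ℝ // 0 < ρ ∧ ρ ≤ Metric.diam U}),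
    ENNReal.ofReal ((ρ : ℝ) ^ (-(lam / q))) *
      wLp q f (volume.restrict (Metric.ball x ρ ∩ U))

/-! The weak Morrey bound `M` gives `‖f‖_{L^q_w(B_ρ(x) ∩ U)} ≤ ρ^{(n-q)/q} M`, and `B_ρ(x)`, a cube
for the sup norm, has volume `(2ρ)^n`. Kolmogorov's inequality
`‖f‖_{L^s(μ)} ≤ (q/(q-s))^{1/s} μ(X)^{1/s-1/q} ‖f‖_{L^q_w(μ)}` for `s < q`, obtained by cutting the
layer-cake integral of `|f|^s` at the height where the two bounds on the distribution function
(total mass and weak-type tail) balance, then yields `‖f‖_{L^s(B_ρ(x) ∩ U)} ≤ C ρ^{(n-s)/s} M`,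
which is the Morrey bound. -/

section WeakLp

variable {α : Type*} [MeasurableSpace α] {μ : Measure α} {f : α → ℝ} {q : ℝ}

theorem meas_lt_abs_le_wLp_rpow_mul (hq : 0 < q) {t : ℝ} (ht : 0 < t) :
    μ {x | t < |f x|} ≤ wLp q f μ ^ q * ENNReal.ofReal (t ^ (-q)) := by
  have hle : ENNReal.ofReal t * μ {x | t < |f x|} ^ (1 / q) ≤ wLp q f μ := by
    have := le_iSup (fun s : ℝ≥0 => (s : ℝ≥0∞) * μ {x | (s : ℝ) < |f x|} ^ (1 / q)) t.toNNReal
    rwa [Real.coe_toNNReal t ht.le] at this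
  have hdiv : μ {x | t < |f x|} ^ (1 / q) ≤ wLp q f μ / ENNReal.ofReal t :=
    ENNReal.le_div_iff_mul_le (Or.inl (by simpa using ht)) (Or.inl ENNReal.ofReal_ne_top)
      |>.2 (by rwa [mul_comm])
  calc μ {x | t < |f x|} = (μ {x | t < |f x|} ^ (1 / q)) ^ q := by
        rw [← ENNReal.rpow_mul, one_div, inv_mul_cancel₀ hq.ne', ENNReal.rpow_one]
    _ ≤ (wLp q f μ / ENNReal.ofReal t) ^ q := ENNReal.rpow_le_rpow hdiv hq.le
    _ = wLp q f μ ^ q * ENNReal.ofReal (t ^ (-q)) := by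
        rw [ENNReal.div_rpow_of_nonneg _ _ hq.le, div_eq_mul_inv, ENNReal.ofReal_rpow_of_pos ht,
          ← ENNReal.ofReal_inv_of_pos (Real.rpow_pos_of_pos ht q), ← Real.rpow_neg ht.le]

theorem ae_eq_zero_of_wLp_eq_zero (hq : 0 < q) (h : wLp q f μ = 0) : f =ᵐ[μ] 0 := by
  have hnull : ∀ k : ℕ, μ {x | (1 / (k + 1) : ℝ) < |f x|} = 0 := fun k => by
    simpa [h, ENNReal.zero_rpow_of_pos hq] using
      meas_lt_abs_le_wLp_rpow_mul (μ := μ) (f := f) hq (t := 1 / (k + 1)) (by positivity)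
  have hsupp : {x | f x ≠ 0} = ⋃ k : ℕ, {x | (1 / (k + 1) : ℝ) < |f x|} := by
    ext x
    simp only [Set.mem_ofPred_eq, Set.mem_iUnion]
    refine ⟨fun hx => exists_nat_one_div_lt (abs_pos.2 hx), ?_⟩
    rintro ⟨k, hk⟩ h0
    rw [h0, abs_zero] at hk
    exact absurd hk (not_lt.2 (by positivity))
  exact ae_iff.2 (hsupp ▸ measure_iUnion_null hnull)

theorem setLIntegral_Ioc_meas_lt_abs_mul_rpow_le {s T : ℝ} (hs : 0 < s) (hT : 0 < T) :
    ∫⁻ t in Set.Ioc 0 T, μ {x | t < |f x|} * ENNReal.ofReal (t ^ (s - 1)) ≤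
      μ Set.univ * ENNReal.ofReal (T ^ s / s) := by
  calc ∫⁻ t in Set.Ioc 0 T, μ {x | t < |f x|} * ENNReal.ofReal (t ^ (s - 1))
      ≤ ∫⁻ t in Set.Ioc 0 T, μ Set.univ * ENNReal.ofReal (t ^ (s - 1)) :=
        lintegral_mono fun t => mul_le_mul_left (measure_mono (Set.subset_univ _)) _
    _ = μ Set.univ * ∫⁻ t in Set.Ioc 0 T, ENNReal.ofReal (t ^ (s - 1)) :=
        lintegral_const_mul _ (measurable_id.pow_const _).ennreal_ofReal
    _ = μ Set.univ * ENNReal.ofReal (T ^ s / s) := by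
        have hint := intervalIntegral.intervalIntegrable_rpow' (a := 0) (b := T)
          (r := s - 1) (by linarith)
        rw [← ofReal_integral_eq_lintegral_ofReal (hint.1)
          ((ae_restrict_iff' measurableSet_Ioc).2 (.of_forall fun t ht =>
            Real.rpow_nonneg ht.1.le _)),
          ← intervalIntegral.integral_of_le hT.le, integral_rpow (Or.inl (by linarith)),
          sub_add_cancel, Real.zero_rpow hs.ne', sub_zero]

theorem setLIntegral_Ioi_meas_lt_abs_mul_rpow_le {s T : ℝ} (hs : 0 < s) (hsq : s < q)
    (hT : 0 < T) :
    ∫⁻ t in Set.Ioi T, μ {x | t < |f x|} * ENNReal.ofReal (t ^ (s - 1)) ≤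
      wLp q f μ ^ q * ENNReal.ofReal (T ^ (s - q) / (q - s)) := by
  have hmeas : Measurable fun t : ℝ => ENNReal.ofReal (t ^ (s - 1 - q)) :=
    (measurable_id.pow_const _).ennreal_ofReal
  calc ∫⁻ t in Set.Ioi T, μ {x | t < |f x|} * ENNReal.ofReal (t ^ (s - 1))
      ≤ ∫⁻ t in Set.Ioi T, wLp q f μ ^ q * ENNReal.ofReal (t ^ (s - 1 - q)) := by
        refine setLIntegral_mono (measurable_const.mul hmeas) fun t ht => ?_
        have ht0 : 0 < t := hT.trans ht
        calc μ {x | t < |f x|} * ENNReal.ofReal (t ^ (s - 1))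
            ≤ wLp q f μ ^ q * ENNReal.ofReal (t ^ (-q)) * ENNReal.ofReal (t ^ (s - 1)) :=
              mul_le_mul_left (meas_lt_abs_le_wLp_rpow_mul (hs.trans hsq) ht0) _
          _ = wLp q f μ ^ q * ENNReal.ofReal (t ^ (s - 1 - q)) := by
              rw [mul_assoc, ← ENNReal.ofReal_mul (Real.rpow_nonneg ht0.le _),
                ← Real.rpow_add ht0, neg_add_eq_sub]
    _ = wLp q f μ ^ q * ∫⁻ t in Set.Ioi T, ENNReal.ofReal (t ^ (s - 1 - q)) :=
        lintegral_const_mul _ hmeas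
    _ = wLp q f μ ^ q * ENNReal.ofReal (T ^ (s - q) / (q - s)) := by
        rw [← ofReal_integral_eq_lintegral_ofReal
          (integrableOn_Ioi_rpow_of_lt (by linarith) hT)
          ((ae_restrict_iff' measurableSet_Ioi).2 (.of_forall fun t ht =>
            Real.rpow_nonneg (hT.trans ht).le _)),
          integral_Ioi_rpow_of_lt (by linarith) hT, neg_div, ← div_neg,
          show s - 1 - q + 1 = s - q by ring, neg_sub]

theorem lintegral_abs_rpow_le_of_wLp {s T : ℝ} (hs : 0 < s) (hsq : s < q) (hT : 0 < T)
    (hf : AEMeasurable f μ) :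
    ∫⁻ x, ENNReal.ofReal (|f x| ^ s) ∂μ ≤ ENNReal.ofReal s *
      (μ Set.univ * ENNReal.ofReal (T ^ s / s) +
        wLp q f μ ^ q * ENNReal.ofReal (T ^ (s - q) / (q - s))) := by
  rw [lintegral_rpow_eq_lintegral_meas_lt_mul μ (.of_forall fun x => abs_nonneg (f x)) hf.abs hs,
    ← Set.Ioc_union_Ioi_eq_Ioi hT.le,
    lintegral_union measurableSet_Ioi (Set.Ioc_disjoint_Ioi le_rfl)]
  exact mul_le_mul_right (add_le_add (setLIntegral_Ioc_meas_lt_abs_mul_rpow_le hs hT)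
    (setLIntegral_Ioi_meas_lt_abs_mul_rpow_le hs hsq hT)) _

theorem eLpNorm_ofReal_eq_lintegral_abs_rpow {s : ℝ} (hs : 0 < s) :
    eLpNorm f (ENNReal.ofReal s) μ = (∫⁻ x, ENNReal.ofReal (|f x| ^ s) ∂μ) ^ (1 / s) := by
  rw [eLpNorm_eq_lintegral_rpow_enorm_toReal (by simpa using hs) ENNReal.ofReal_ne_top,
    ENNReal.toReal_ofReal hs.le]
  congr 2 with x
  rw [← ofReal_norm, Real.norm_eq_abs,
    ENNReal.ofReal_rpow_of_nonneg (abs_nonneg _) hs.le]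

/-- The cut height `T = W V^{-1/q}` balances the two terms of the layer-cake bound. -/
theorem lintegral_abs_rpow_le_of_wLp_le {s V W : ℝ} (hs : 0 < s) (hsq : s < q)
    (hf : AEMeasurable f μ) (hV : 0 < V) (hμ : μ Set.univ ≤ ENNReal.ofReal V) (hW : 0 < W)
    (hfW : wLp q f μ ≤ ENNReal.ofReal W) :
    ∫⁻ x, ENNReal.ofReal (|f x| ^ s) ∂μ ≤
      ENNReal.ofReal (q / (q - s) * V ^ (1 - s / q) * W ^ s) := by
  have hq : 0 < q := hs.trans hsq
  set T := W * V ^ (-1 / q) with hT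
  have hT0 : 0 < T := by positivity
  have hlow : V * T ^ s = V ^ (1 - s / q) * W ^ s := by
    rw [hT, Real.mul_rpow hW.le (by positivity), ← Real.rpow_mul hV.le,
      show 1 - s / q = 1 + -1 / q * s by ring, Real.rpow_add hV, Real.rpow_one]
    ring
  have hhigh : W ^ q * T ^ (s - q) = V ^ (1 - s / q) * W ^ s := by
    rw [hT, Real.mul_rpow hW.le (by positivity), ← Real.rpow_mul hV.le,
      show -1 / q * (s - q) = 1 - s / q by field_simp; ring, ← mul_assoc,
      ← Real.rpow_add hW, add_sub_cancel]
    ring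
  calc ∫⁻ x, ENNReal.ofReal (|f x| ^ s) ∂μ
      ≤ ENNReal.ofReal s * (μ Set.univ * ENNReal.ofReal (T ^ s / s) +
          wLp q f μ ^ q * ENNReal.ofReal (T ^ (s - q) / (q - s))) :=
        lintegral_abs_rpow_le_of_wLp hs hsq hT0 hf
    _ ≤ ENNReal.ofReal s * (ENNReal.ofReal V * ENNReal.ofReal (T ^ s / s) +
          ENNReal.ofReal W ^ q * ENNReal.ofReal (T ^ (s - q) / (q - s))) := by
        gcongr
    _ = ENNReal.ofReal (s * (V * (T ^ s / s) + W ^ q * (T ^ (s - q) / (q - s)))) := by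
        have hqs : 0 < q - s := by linarith
        rw [ENNReal.ofReal_rpow_of_pos hW, ← ENNReal.ofReal_mul hV.le,
          ← ENNReal.ofReal_mul (by positivity), ← ENNReal.ofReal_add (by positivity)
          (by positivity), ← ENNReal.ofReal_mul hs.le]
    _ = ENNReal.ofReal (q / (q - s) * V ^ (1 - s / q) * W ^ s) := by
        rw [mul_div_assoc', mul_div_assoc', hlow, hhigh]
        have hqs : q - s ≠ 0 := by linarith
        congr 1
        field_simp
        ring

theorem eLpNorm_le_of_wLp_le {s V W : ℝ} (hs : 0 < s) (hsq : s < q) (hf : AEMeasurable f μ)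
    (hV : 0 < V) (hμ : μ Set.univ ≤ ENNReal.ofReal V) (hW : 0 ≤ W)
    (hfW : wLp q f μ ≤ ENNReal.ofReal W) :
    eLpNorm f (ENNReal.ofReal s) μ ≤
      ENNReal.ofReal ((q / (q - s)) ^ (1 / s) * V ^ (1 / s - 1 / q) * W) := by
  have hq : 0 < q := hs.trans hsq
  rcases hW.eq_or_lt with rfl | hW
  · have hf0 : f =ᵐ[μ] 0 :=
      ae_eq_zero_of_wLp_eq_zero hq (le_antisymm (by simpa using hfW) zero_le)
    simp [eLpNorm_congr_ae hf0]
  rw [eLpNorm_ofReal_eq_lintegral_abs_rpow hs]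
  calc (∫⁻ x, ENNReal.ofReal (|f x| ^ s) ∂μ) ^ (1 / s)
      ≤ ENNReal.ofReal (q / (q - s) * V ^ (1 - s / q) * W ^ s) ^ (1 / s) := by
        gcongr
        exact lintegral_abs_rpow_le_of_wLp_le hs hsq hf hV hμ hW hfW
    _ = ENNReal.ofReal ((q / (q - s)) ^ (1 / s) * V ^ (1 / s - 1 / q) * W) := by
        have hqs : 0 < q - s := by linarith
        rw [ENNReal.ofReal_rpow_of_nonneg (by positivity) (by positivity),
          Real.mul_rpow (by positivity) (by positivity),
          Real.mul_rpow (by positivity) (by positivity), ← Real.rpow_mul hV.le,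
          ← Real.rpow_mul hW.le, mul_one_div_cancel hs.ne', Real.rpow_one,
          show (1 - s / q) * (1 / s) = 1 / s - 1 / q by field_simp]

end WeakLp

section Morrey

variable {n : ℕ} {U : Set (Fin n → ℝ)} {f : (Fin n → ℝ) → ℝ}

theorem wLp_le_weakMorreyNorm {q lam : ℝ} {x : Fin n → ℝ} (hx : x ∈ U) {ρ : ℝ} (hρ : 0 < ρ)
    (hρU : ρ ≤ diam U) :
    wLp q f (volume.restrict (ball x ρ ∩ U)) ≤
      ENNReal.ofReal (ρ ^ (lam / q)) * weakMorreyNorm q lam U f := by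
  have hM : ENNReal.ofReal (ρ ^ (-(lam / q))) * wLp q f (volume.restrict (ball x ρ ∩ U)) ≤
      weakMorreyNorm q lam U f :=
    le_iSup₂_of_le x hx (le_iSup_of_le ⟨ρ, hρ, hρU⟩ le_rfl)
  calc wLp q f (volume.restrict (ball x ρ ∩ U))
      = ENNReal.ofReal (ρ ^ (lam / q)) *
          (ENNReal.ofReal (ρ ^ (-(lam / q))) * wLp q f (volume.restrict (ball x ρ ∩ U))) := by
        rw [← mul_assoc, ← ENNReal.ofReal_mul (by positivity), ← Real.rpow_add hρ,
          add_neg_cancel, Real.rpow_zero, ENNReal.ofReal_one, one_mul]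
    _ ≤ ENNReal.ofReal (ρ ^ (lam / q)) * weakMorreyNorm q lam U f := by gcongr

theorem morreyNorm_le_weakMorreyNorm {q s : ℝ} (hs : 0 < s) (hsq : s < q) (hf : Measurable f) :
    morreyNorm s (n - s) U f ≤
      ENNReal.ofReal ((q / (q - s)) ^ (1 / s) * ((2 : ℝ) ^ n) ^ (1 / s - 1 / q)) *
        weakMorreyNorm q (n - q) U f := by
  have hq : 0 < q := hs.trans hsq
  set K := (q / (q - s)) ^ (1 / s) * ((2 : ℝ) ^ n) ^ (1 / s - 1 / q)
  have hK : 0 < K := by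
    have : 0 < q - s := by linarith
    positivity
  obtain hM | hM := eq_or_ne (weakMorreyNorm q (n - q) U f) ⊤
  · simp [hM, ENNReal.mul_top, hK]
  obtain ⟨M, hM0, hMeq⟩ : ∃ M : ℝ, 0 ≤ M ∧ weakMorreyNorm q (n - q) U f = ENNReal.ofReal M :=
    ⟨_, ENNReal.toReal_nonneg, (ENNReal.ofReal_toReal hM).symm⟩
  rw [hMeq, ← ENNReal.ofReal_mul hK.le]
  refine iSup₂_le fun x hx => iSup_le fun ⟨ρ, hρ, hρU⟩ => ?_
  have hvol : volume.restrict (ball x ρ ∩ U) Set.univ ≤ ENNReal.ofReal ((2 * ρ) ^ n) := by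
    rw [Measure.restrict_apply_univ]
    refine (measure_mono Set.inter_subset_left).trans_eq ?_
    rw [Real.volume_pi_ball x hρ, Fintype.card_fin]
  have hwLp := wLp_le_weakMorreyNorm (f := f) (q := q) (lam := n - q) hx hρ hρU
  rw [hMeq, ← ENNReal.ofReal_mul (by positivity)] at hwLp
  have hLs := eLpNorm_le_of_wLp_le hs hsq hf.aemeasurable (by positivity) hvol (by positivity)
    hwLp
  calc ENNReal.ofReal (ρ ^ (-((n - s) / s))) * eLpNorm f (ENNReal.ofReal s)
        (volume.restrict (ball x ρ ∩ U))
      ≤ ENNReal.ofReal (ρ ^ (-((n - s) / s))) * ENNReal.ofReal ((q / (q - s)) ^ (1 / s) *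
          ((2 * ρ) ^ n) ^ (1 / s - 1 / q) * (ρ ^ ((n - q) / q) * M)) := by gcongr
    _ = ENNReal.ofReal (K * M) := by
        rw [← ENNReal.ofReal_mul (by positivity)]
        congr 1
        have hρ1 : ρ ^ (-((n - s) / s)) * ρ ^ ((n : ℝ) * (1 / s - 1 / q)) *
            ρ ^ ((n - q) / q) = 1 := by
          rw [← Real.rpow_add hρ, ← Real.rpow_add hρ]
          convert Real.rpow_zero ρ using 2
          field_simp
          ring
        rw [mul_pow, Real.mul_rpow (by positivity) (by positivity), ← Real.rpow_natCast ρ,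
          ← Real.rpow_mul hρ.le]
        linear_combination K * M * hρ1

end Morrey

theorem stmt_7_general (n : ℕ) (q r : ℝ) (hr : 2 < r) (hrq : r < q)
    (U : Set (Fin n → ℝ)) :
    (∃ C : ℝ, 0 < C ∧ ∀ f : (Fin n → ℝ) → ℝ, Measurable f →
      morreyNorm r (n - r) U f ≤ ENNReal.ofReal C * weakMorreyNorm q (n - q) U f) ∧
    (∃ C : ℝ, 0 < C ∧ ∀ f : (Fin n → ℝ) → ℝ, Measurable f →
      morreyNorm 2 (n - 2) U f ≤ ENNReal.ofReal C * weakMorreyNorm q (n - q) U f) := by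
  have embed (s : ℝ) (hs : 0 < s) (hsq : s < q) : ∃ C : ℝ, 0 < C ∧
      ∀ f : (Fin n → ℝ) → ℝ, Measurable f →
        morreyNorm s (n - s) U f ≤ ENNReal.ofReal C * weakMorreyNorm q (n - q) U f := by
    refine ⟨_, ?_, fun f hf => morreyNorm_le_weakMorreyNorm hs hsq hf⟩
    have : 0 < q := hs.trans hsq
    have : 0 < q - s := by linarith
    positivity
  exact ⟨embed r (by linarith) hrq, embed 2 two_pos (by linarith)⟩

/-- **Weak Morrey spaces embed into Morrey spaces.**  For `2 < r < q ≤ n`, the weak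
Morrey space `L^{q,n-q}_w(U)` embeds continuously into the Morrey space `L^{r,n-r}(U)`
on a bounded domain `U ⊆ ℝⁿ`; in particular `L^{q,n-q}_w(U) ↪ L^{2,n-2}(U)`
continuously. -/
theorem stmt_7 (n : ℕ) (q r : ℝ) (hr : 2 < r) (hrq : r < q) (hqn : q ≤ n)
    (U : Set (Fin n → ℝ)) (hUopen : IsOpen U) (hUbdd : Bornology.IsBounded U) :
    (∃ C : ℝ, 0 < C ∧ ∀ f : (Fin n → ℝ) → ℝ, Measurable f →
      morreyNorm r (n - r) U f ≤ ENNReal.ofReal C * weakMorreyNorm q (n - q) U f) ∧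
    (∃ C : ℝ, 0 < C ∧ ∀ f : (Fin n → ℝ) → ℝ, Measurable f →
      morreyNorm 2 (n - 2) U f ≤ ENNReal.ofReal C * weakMorreyNorm q (n - q) U f) :=
  stmt_7_general n q r hr hrq U
end

section
/- On a bounded domain U ⊆ ℝⁿ with n ≥ 3, the Morrey–Sobolev space L^{r,n-r}_1(U) (functions whose gradient lies in the Morrey space L^{r,n-r}(U)) with 2 < r < n embeds continuously into BMO(U): there is C = C(n,r,U) with [f]_{BMO(U)} ≤ C ‖∇f‖_{L^{r,n-r}(U)}. -/
open MeasureTheory Metric ENNReal NNReal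

/-- The BMO seminorm of `f` on `U ⊆ ℝⁿ`: the supremum over balls `B ⊆ U` of the mean
oscillation `⨍_B |f − ⨍_B f|`. -/
noncomputable def bmoSeminorm {n : ℕ} (U : Set (Fin n → ℝ)) (f : (Fin n → ℝ) → ℝ) : ℝ≥0∞ :=
  ⨆ (x : Fin n → ℝ) (ρ : {ρ : ℝ // 0 < ρ}) (_ : Metric.ball x (ρ : ℝ) ⊆ U),
    (volume (Metric.ball x (ρ : ℝ)))⁻¹ *
      ∫⁻ y in Metric.ball x (ρ : ℝ),
        ENNReal.ofReal |f y - ⨍ z in Metric.ball x (ρ : ℝ), f z|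

/-!
It suffices to bound the mean oscillation on one ball `B = B(x, ρ) ⊆ U`. For `y, z ∈ B` the
fundamental theorem of calculus along `[z, y]` gives
`|f y - f z| ≤ 2ρ ∫₀¹ |∇f (z + t (y - z))| dt`. After integrating over `y, z ∈ B`, substitute
`y ↦ z + t (y - z)` when `t ≥ 1/2` and `z ↦ z + t (y - z)` when `t ≤ 1/2`: either map is a
homothety of ratio at least `1/2` sending the convex set `B` into itself, so it costs a factor
at most `2ⁿ`. This is the Poincaré inequality `⨍_B |f - f_B| ≤ 2ⁿ · 2ρ · ⨍_B |∇f|`. Hölder gives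
`⨍_B |∇f| ≤ |B|^{-1/r} ‖∇f‖_{L^r(B)}`, the Morrey norm bounds `‖∇f‖_{L^r(B)}` by
`ρ^{(n-r)/r} ‖∇f‖_{L^{r,n-r}(U)}`, and since `|B| = |B(0, 1)| ρⁿ` the powers of `ρ` cancel:
`1 - n/r + (n - r)/r = 0`.
-/

open Set Module
open AffineMap (lineMap homothety)

section Average

variable {α F : Type*} [MeasurableSpace α] {μ : Measure α} {B : Set α}
  [NormedAddCommGroup F]

theorem setLIntegral_mono₀ (hB : NullMeasurableSet B μ) {g h : α → ℝ≥0∞}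
    (hgh : ∀ y ∈ B, g y ≤ h y) : ∫⁻ y in B, g y ∂μ ≤ ∫⁻ y in B, h y ∂μ :=
  lintegral_mono_ae <| (ae_restrict_mem₀ hB).mono hgh

theorem integrableOn_of_lintegral_lintegral_enorm_sub_ne_top (h0 : μ B ≠ 0) (hT : μ B ≠ ∞)
    {f : α → F} (hf : AEStronglyMeasurable f (μ.restrict B))
    (hfin : ∫⁻ y in B, ∫⁻ z in B, ‖f y - f z‖ₑ ∂μ ∂μ ≠ ∞) : IntegrableOn f B μ := by
  have : IsFiniteMeasure (μ.restrict B) := isFiniteMeasure_restrict.2 hT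
  obtain ⟨y, hy⟩ : ∃ y, ∫⁻ z in B, ‖f y - f z‖ₑ ∂μ ≠ ∞ := by
    by_contra! htop
    simp [htop, ENNReal.top_mul h0] at hfin
  have hsub : Integrable (fun z => f y - f z) (μ.restrict B) :=
    ⟨aestronglyMeasurable_const.sub hf, lt_top_iff_ne_top.2 hy⟩
  exact ((integrable_const (f y)).sub hsub).congr
    (ae_of_all _ fun z => sub_sub_cancel (f y) (f z))

theorem setLIntegral_enorm_le_eLpNorm_mul_rpow {g : α → F}
    (hg : AEStronglyMeasurable g (μ.restrict B)) {p : ℝ} (hp : 1 ≤ p) :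
    ∫⁻ y in B, ‖g y‖ₑ ∂μ ≤ eLpNorm g (ENNReal.ofReal p) (μ.restrict B) * μ B ^ (1 - p⁻¹) := by
  simpa [eLpNorm_one_eq_lintegral_enorm, ENNReal.toReal_ofReal (by linarith : 0 ≤ p)] using
    eLpNorm_le_eLpNorm_mul_rpow_measure_univ (ENNReal.one_le_ofReal.2 hp) hg

variable [NormedSpace ℝ F] [CompleteSpace F]

theorem enorm_sub_setAverage_le (h0 : μ B ≠ 0) (hT : μ B ≠ ∞) {f : α → F}
    (hf : IntegrableOn f B μ) (a : F) :
    ‖a - ⨍ z in B, f z ∂μ‖ₑ ≤ (μ B)⁻¹ * ∫⁻ z in B, ‖a - f z‖ₑ ∂μ := by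
  have : IsFiniteMeasure (μ.restrict B) := isFiniteMeasure_restrict.2 hT
  have hint : ∫ z in B, (a - f z) ∂μ = μ.real B • (a - ⨍ z in B, f z ∂μ) := by
    rw [integral_sub (integrable_const _) hf, setIntegral_const, ← measure_smul_setAverage f hT,
      smul_sub]
  rw [← ENNReal.mul_le_iff_le_inv h0 hT]
  calc μ B * ‖a - ⨍ z in B, f z ∂μ‖ₑ = ‖∫ z in B, (a - f z) ∂μ‖ₑ := by
        rw [hint, enorm_smul, Real.enorm_of_nonneg measureReal_nonneg, measureReal_def,
          ENNReal.ofReal_toReal hT]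
    _ ≤ ∫⁻ z in B, ‖a - f z‖ₑ ∂μ := enorm_integral_le_lintegral_enorm _

theorem lintegral_enorm_sub_setAverage_le (h0 : μ B ≠ 0) (hT : μ B ≠ ∞) {f : α → F}
    (hf : AEStronglyMeasurable f (μ.restrict B)) :
    ∫⁻ y in B, ‖f y - ⨍ z in B, f z ∂μ‖ₑ ∂μ
      ≤ (μ B)⁻¹ * ∫⁻ y in B, ∫⁻ z in B, ‖f y - f z‖ₑ ∂μ ∂μ := by
  by_cases hfin : ∫⁻ y in B, ∫⁻ z in B, ‖f y - f z‖ₑ ∂μ ∂μ = ∞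
  · simp [hfin, ENNReal.mul_top (ENNReal.inv_ne_zero.2 hT)]
  have hfi := integrableOn_of_lintegral_lintegral_enorm_sub_ne_top h0 hT hf hfin
  calc ∫⁻ y in B, ‖f y - ⨍ z in B, f z ∂μ‖ₑ ∂μ
      ≤ ∫⁻ y in B, (μ B)⁻¹ * ∫⁻ z in B, ‖f y - f z‖ₑ ∂μ ∂μ :=
        lintegral_mono fun y => enorm_sub_setAverage_le h0 hT hfi (f y)
    _ = (μ B)⁻¹ * ∫⁻ y in B, ∫⁻ z in B, ‖f y - f z‖ₑ ∂μ ∂μ :=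
        lintegral_const_mul' _ _ (ENNReal.inv_ne_top.2 h0)

end Average

section Segment

variable {E F : Type*} [NormedAddCommGroup E] [NormedSpace ℝ E]
  [NormedAddCommGroup F] [NormedSpace ℝ F] [CompleteSpace F]

theorem enorm_sub_le_lintegral_deriv {g : ℝ → F} {a b : ℝ} (hab : a ≤ b)
    (hgc : ContinuousOn g (Icc a b)) (hgd : DifferentiableOn ℝ g (Ioo a b)) :
    ‖g b - g a‖ₑ ≤ ∫⁻ t in Icc a b, ‖deriv g t‖ₑ := by
  by_cases htop : ∫⁻ t in Icc a b, ‖deriv g t‖ₑ = ∞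
  · simp [htop]
  have hint : IntegrableOn (fun t => ‖deriv g t‖) (Ioc a b) :=
    ⟨(aestronglyMeasurable_deriv g _).norm,
      by simpa [hasFiniteIntegral_iff_enorm, restrict_Ioc_eq_restrict_Icc] using
        lt_top_iff_ne_top.2 htop⟩
  have hle := norm_sub_le_integral_of_norm_deriv_le_of_le hab hgc hgd
    (ae_of_all _ fun _ _ => le_rfl) ((intervalIntegrable_iff_integrableOn_Ioc_of_le hab).2 hint)
  rw [intervalIntegral.integral_of_le hab] at hle
  calc ‖g b - g a‖ₑ = ENNReal.ofReal ‖g b - g a‖ := (ofReal_norm _).symm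
    _ ≤ ENNReal.ofReal (∫ t in Ioc a b, ‖deriv g t‖) := ENNReal.ofReal_le_ofReal hle
    _ = ∫⁻ t in Icc a b, ‖deriv g t‖ₑ := by
        rw [ofReal_integral_eq_lintegral_ofReal hint (ae_of_all _ fun _ => norm_nonneg _),
          restrict_Ioc_eq_restrict_Icc]
        simp only [ofReal_norm]

theorem enorm_sub_le_mul_lintegral_fderiv_lineMap {f : E → F} {U : Set E} (hU : IsOpen U)
    (hf : DifferentiableOn ℝ f U) {y z : E} (hzy : segment ℝ z y ⊆ U) :
    ‖f y - f z‖ₑ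
      ≤ ‖y - z‖ₑ * ∫⁻ t in Icc (0 : ℝ) 1, ‖fderiv ℝ f (lineMap z y t)‖ₑ := by
  have hmem : ∀ t ∈ Icc (0 : ℝ) 1, lineMap z y t ∈ U := fun t ht =>
    hzy (segment_eq_image_lineMap ℝ z y ▸ mem_image_of_mem _ ht)
  have hderiv : ∀ t ∈ Icc (0 : ℝ) 1, HasDerivAt (f ∘ lineMap z y)
      (fderiv ℝ f (lineMap z y t) (y - z)) t := fun t ht =>
    (hf.differentiableAt (hU.mem_nhds (hmem t ht))).hasFDerivAt.comp_hasDerivAt t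
      AffineMap.hasDerivAt_lineMap
  have hftc := enorm_sub_le_lintegral_deriv zero_le_one
    (fun t ht => (hderiv t ht).continuousAt.continuousWithinAt)
    (fun t ht => (hderiv t (Ioo_subset_Icc_self ht)).differentiableAt.differentiableWithinAt)
  simp only [Function.comp_apply, AffineMap.lineMap_apply_one, AffineMap.lineMap_apply_zero]
    at hftc
  calc ‖f y - f z‖ₑ ≤ ∫⁻ t in Icc (0 : ℝ) 1, ‖deriv (f ∘ lineMap z y) t‖ₑ := hftc
    _ ≤ ∫⁻ t in Icc (0 : ℝ) 1, ‖y - z‖ₑ * ‖fderiv ℝ f (lineMap z y t)‖ₑ :=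
        setLIntegral_mono' measurableSet_Icc fun t ht => by
          rw [(hderiv t ht).deriv, mul_comm]
          exact ContinuousLinearMap.le_opENorm _ _
    _ = _ := lintegral_const_mul' _ _ enorm_ne_top

end Segment

section Haar

variable {E F : Type*} [NormedAddCommGroup E] [NormedSpace ℝ E] [MeasurableSpace E] [BorelSpace E]
  [FiniteDimensional ℝ E] (μ : Measure E) [μ.IsAddHaarMeasure]
  [NormedAddCommGroup F] [NormedSpace ℝ F] [CompleteSpace F]

theorem lintegral_comp_homothety (G : E → ℝ≥0∞) (c : E) {s : ℝ} (hs : s ≠ 0) :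
    ∫⁻ y, G (homothety c s y) ∂μ = ENNReal.ofReal |(s ^ finrank ℝ E)⁻¹| * ∫⁻ y, G y ∂μ := by
  have hmap := Measure.map_addHaar_smul μ hs
  calc ∫⁻ y, G (homothety c s y) ∂μ = ∫⁻ y, G (s • y + (c - s • c)) ∂μ := by
        refine lintegral_congr fun y => congrArg G ?_
        rw [AffineMap.homothety_apply, vsub_eq_sub, vadd_eq_add]
        module
    _ = ∫⁻ y, G (y + (c - s • c)) ∂(Measure.map (MeasurableEquiv.smul₀ s hs) μ) :=
        (lintegral_map_equiv (fun y => G (y + (c - s • c))) (MeasurableEquiv.smul₀ s hs)).symm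
    _ = _ := by
        rw [MeasurableEquiv.coe_smul₀, hmap, lintegral_smul_measure, lintegral_add_right_eq_self]
        rfl

theorem setLIntegral_comp_homothety_le {B : Set E} (hB : Convex ℝ B) {c : E} (hc : c ∈ B)
    {s : ℝ} (hs : 1 / 2 ≤ s) (hs1 : s ≤ 1) (G : E → ℝ≥0∞) :
    ∫⁻ y in B, G (homothety c s y) ∂μ ≤ 2 ^ finrank ℝ E * ∫⁻ y in B, G y ∂μ := by
  have hs0 : s ≠ 0 := by positivity
  have hmaps : ∀ y ∈ B, homothety c s y ∈ B := fun y hy => by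
    rw [AffineMap.homothety_eq_lineMap]
    exact hB.lineMap_mem hc hy ⟨by linarith, hs1⟩
  have hscale : ENNReal.ofReal |(s ^ finrank ℝ E)⁻¹| ≤ 2 ^ finrank ℝ E := by
    rw [← inv_pow, abs_pow, ENNReal.ofReal_pow (abs_nonneg _), abs_inv, abs_of_pos (by linarith)]
    gcongr
    rw [← ENNReal.ofReal_ofNat]
    exact ENNReal.ofReal_le_ofReal ((inv_le_comm₀ (by linarith) two_pos).2 (by linarith))
  calc ∫⁻ y in B, G (homothety c s y) ∂μ
      ≤ ∫⁻ y in B, B.indicator G (homothety c s y) ∂μ :=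
        setLIntegral_mono₀ (hB.nullMeasurableSet μ) fun y hy => by
          rw [indicator_of_mem (hmaps y hy)]
    _ ≤ ∫⁻ y, B.indicator G (homothety c s y) ∂μ := setLIntegral_le_lintegral _ _
    _ = ENNReal.ofReal |(s ^ finrank ℝ E)⁻¹| * ∫⁻ y in B, G y ∂μ := by
        rw [lintegral_comp_homothety μ _ c hs0, lintegral_indicator₀ (hB.nullMeasurableSet μ)]
    _ ≤ 2 ^ finrank ℝ E * ∫⁻ y in B, G y ∂μ := by gcongr

theorem lintegral_lintegral_comp_lineMap_le {B : Set E} (hB : Convex ℝ B) {G : E → ℝ≥0∞}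
    (hG : Measurable G) {t : ℝ} (ht : t ∈ Icc (0 : ℝ) 1) :
    ∫⁻ y in B, ∫⁻ z in B, G (lineMap z y t) ∂μ ∂μ
      ≤ 2 ^ finrank ℝ E * μ B * ∫⁻ w in B, G w ∂μ := by
  have hBm := hB.nullMeasurableSet μ
  rw [mul_right_comm, ← setLIntegral_const]
  rcases le_total t (1 / 2) with hle | hge
  · refine setLIntegral_mono₀ hBm fun y hy => ?_
    simp_rw [← AffineMap.lineMap_apply_one_sub y, ← AffineMap.homothety_eq_lineMap]
    exact setLIntegral_comp_homothety_le μ hB hy (by linarith) (by linarith [ht.1]) G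
  · have hmeas : Measurable fun p : E × E => G (lineMap p.2 p.1 t) :=
      hG.comp (by fun_prop)
    rw [lintegral_lintegral_swap hmeas.aemeasurable]
    refine setLIntegral_mono₀ hBm fun z hz => ?_
    simp_rw [← AffineMap.homothety_eq_lineMap]
    exact setLIntegral_comp_homothety_le μ hB hz hge ht.2 G

theorem lintegral_lintegral_lintegral_comp_lineMap_le {B : Set E} (hB : Convex ℝ B)
    {G : E → ℝ≥0∞} (hG : Measurable G) :
    ∫⁻ y in B, ∫⁻ z in B, (∫⁻ t in Icc (0 : ℝ) 1, G (lineMap z y t)) ∂μ ∂μ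
      ≤ 2 ^ finrank ℝ E * μ B * ∫⁻ w in B, G w ∂μ := by
  have hmeas : Measurable fun p : (E × ℝ) × E => G (lineMap p.2 p.1.1 p.1.2) :=
    hG.comp (by fun_prop)
  calc ∫⁻ y in B, ∫⁻ z in B, (∫⁻ t in Icc (0 : ℝ) 1, G (lineMap z y t)) ∂μ ∂μ
      = ∫⁻ y in B, ∫⁻ t in Icc (0 : ℝ) 1, ∫⁻ z in B, G (lineMap z y t) ∂μ ∂volume ∂μ :=
        lintegral_congr fun y => lintegral_lintegral_swap (hG.comp (by fun_prop)).aemeasurable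
    _ = ∫⁻ t in Icc (0 : ℝ) 1, ∫⁻ y in B, ∫⁻ z in B, G (lineMap z y t) ∂μ ∂μ ∂volume :=
        lintegral_lintegral_swap hmeas.lintegral_prod_right'.aemeasurable
    _ ≤ ∫⁻ t in Icc (0 : ℝ) 1, 2 ^ finrank ℝ E * μ B * ∫⁻ w in B, G w ∂μ :=
        setLIntegral_mono' measurableSet_Icc fun t ht =>
          lintegral_lintegral_comp_lineMap_le μ hB hG ht
    _ = 2 ^ finrank ℝ E * μ B * ∫⁻ w in B, G w ∂μ := by simp

theorem lintegral_lintegral_enorm_sub_le {f : E → F} {U : Set E} (hU : IsOpen U)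
    (hf : DifferentiableOn ℝ f U) {B : Set E} (hB : Convex ℝ B) (hBU : B ⊆ U) :
    ∫⁻ y in B, ∫⁻ z in B, ‖f y - f z‖ₑ ∂μ ∂μ
      ≤ ediam B * (2 ^ finrank ℝ E * μ B * ∫⁻ w in B, ‖fderiv ℝ f w‖ₑ ∂μ) := by
  set G : E → ℝ≥0∞ := fun w => ‖fderiv ℝ f w‖ₑ
  have hG : Measurable G := (measurable_fderiv ℝ f).enorm
  have hBm := hB.nullMeasurableSet μ
  have hjoint : Measurable fun p : E × E =>
      ∫⁻ t in Icc (0 : ℝ) 1, G (lineMap p.2 p.1 t) :=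
    (hG.comp (by fun_prop : Measurable fun q : (E × E) × ℝ =>
      lineMap q.1.2 q.1.1 q.2)).lintegral_prod_right'
  have hinner : ∀ y : E, Measurable fun z =>
      ∫⁻ t in Icc (0 : ℝ) 1, G (lineMap z y t) := fun y =>
    (hG.comp (by fun_prop : Measurable fun q : E × ℝ =>
      lineMap q.1 y q.2)).lintegral_prod_right'
  calc ∫⁻ y in B, ∫⁻ z in B, ‖f y - f z‖ₑ ∂μ ∂μ
      ≤ ∫⁻ y in B, ∫⁻ z in B,
          ediam B * (∫⁻ t in Icc (0 : ℝ) 1, G (lineMap z y t)) ∂μ ∂μ :=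
        setLIntegral_mono₀ hBm fun y hy => setLIntegral_mono₀ hBm fun z hz =>
          (enorm_sub_le_mul_lintegral_fderiv_lineMap hU hf
            ((hB.segment_subset hz hy).trans hBU)).trans
            (by rw [← edist_eq_enorm_sub]; gcongr; exact edist_le_ediam_of_mem hy hz)
    _ = ediam B * ∫⁻ y in B, ∫⁻ z in B,
          (∫⁻ t in Icc (0 : ℝ) 1, G (lineMap z y t)) ∂μ ∂μ := by
        rw [← lintegral_const_mul _ hjoint.lintegral_prod_right']
        exact lintegral_congr fun y => lintegral_const_mul _ (hinner y)
    _ ≤ _ := by gcongr; exact lintegral_lintegral_lintegral_comp_lineMap_le μ hB hG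

theorem setLAverage_enorm_sub_setAverage_le {f : E → F} {U : Set E} (hU : IsOpen U)
    (hf : DifferentiableOn ℝ f U) {B : Set E} (hB : Convex ℝ B) (hBm : MeasurableSet B)
    (hBU : B ⊆ U) (h0 : μ B ≠ 0) (hT : μ B ≠ ∞) :
    ⨍⁻ y in B, ‖f y - ⨍ z in B, f z ∂μ‖ₑ ∂μ
      ≤ 2 ^ finrank ℝ E * ediam B * ⨍⁻ w in B, ‖fderiv ℝ f w‖ₑ ∂μ := by
  simp only [setLAverage_eq, ENNReal.div_eq_inv_mul]
  calc (μ B)⁻¹ * ∫⁻ y in B, ‖f y - ⨍ z in B, f z ∂μ‖ₑ ∂μ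
      ≤ (μ B)⁻¹ * ((μ B)⁻¹ * ∫⁻ y in B, ∫⁻ z in B, ‖f y - f z‖ₑ ∂μ ∂μ) := by
        gcongr
        exact lintegral_enorm_sub_setAverage_le h0 hT
          ((hf.continuousOn.mono hBU).aestronglyMeasurable hBm)
    _ ≤ (μ B)⁻¹ * ((μ B)⁻¹ *
          (ediam B * (2 ^ finrank ℝ E * μ B * ∫⁻ w in B, ‖fderiv ℝ f w‖ₑ ∂μ))) := by
        gcongr
        exact lintegral_lintegral_enorm_sub_le μ hU hf hB hBU
    _ = 2 ^ finrank ℝ E * ediam B * ((μ B)⁻¹ * μ B)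
          * ((μ B)⁻¹ * ∫⁻ w in B, ‖fderiv ℝ f w‖ₑ ∂μ) := by ring
    _ = _ := by rw [ENNReal.inv_mul_cancel h0 hT, mul_one]

theorem ofReal_two_mul_mul_measure_ball_rpow (x : E) {ρ r : ℝ} (hρ : 0 < ρ) (hr : r ≠ 0) :
    ENNReal.ofReal (2 * ρ) * μ (ball x ρ) ^ (-r⁻¹)
      = 2 * μ (ball (0 : E) 1) ^ (-r⁻¹) * ENNReal.ofReal (ρ ^ (-((finrank ℝ E - r) / r))) := by
  set d := finrank ℝ E
  have hV0 : μ (ball (0 : E) 1) ≠ 0 := (measure_ball_pos μ 0 one_pos).ne'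
  have hρd : 0 < ρ ^ d := by positivity
  have hexp : ρ * (ρ ^ d) ^ (-r⁻¹) = ρ ^ (-((d - r) / r)) := by
    rw [show -((d - r) / r) = 1 + d * -r⁻¹ by field_simp; ring, Real.rpow_add hρ,
      Real.rpow_one, Real.rpow_mul hρ.le, Real.rpow_natCast]
  rw [Measure.addHaar_ball_of_pos μ x hρ, ENNReal.mul_rpow_of_ne_zero
    (ENNReal.ofReal_pos.2 hρd).ne' hV0, ENNReal.ofReal_rpow_of_pos hρd, ← mul_assoc,
    ← ENNReal.ofReal_mul (by positivity), mul_assoc, hexp, ENNReal.ofReal_mul zero_le_two,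
    ENNReal.ofReal_ofNat]
  ring

theorem setLAverage_enorm_sub_setAverage_ball_le {f : E → F} {U : Set E} (hU : IsOpen U)
    (hf : DifferentiableOn ℝ f U) {x : E} {ρ : ℝ} (hρ : 0 < ρ) (hBU : ball x ρ ⊆ U) {r : ℝ}
    (hr : 1 ≤ r) :
    ⨍⁻ y in ball x ρ, ‖f y - ⨍ z in ball x ρ, f z ∂μ‖ₑ ∂μ
      ≤ 2 ^ (finrank ℝ E + 1) * μ (ball (0 : E) 1) ^ (-r⁻¹)
          * ENNReal.ofReal (ρ ^ (-((finrank ℝ E - r) / r)))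
          * eLpNorm (fun w => ‖fderiv ℝ f w‖) (ENNReal.ofReal r) (μ.restrict (ball x ρ)) := by
  set B := ball x ρ
  set Λ := eLpNorm (fun w => ‖fderiv ℝ f w‖) (ENNReal.ofReal r) (μ.restrict B)
  have h0 : μ B ≠ 0 := (measure_ball_pos μ x hρ).ne'
  have hT : μ B ≠ ∞ := measure_ball_lt_top.ne
  have hdiam : ediam B ≤ ENNReal.ofReal (2 * ρ) :=
    ediam_le_of_forall_dist_le fun y hy z hz => (dist_triangle_right y z x).trans
      (by linarith [mem_ball.1 hy, mem_ball.1 hz])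
  have hpow : (μ B)⁻¹ * μ B ^ (1 - r⁻¹) = μ B ^ (-r⁻¹) := by
    rw [← ENNReal.rpow_neg_one, ← ENNReal.rpow_add _ _ h0 hT]
    ring_nf
  calc ⨍⁻ y in B, ‖f y - ⨍ z in B, f z ∂μ‖ₑ ∂μ
      ≤ 2 ^ finrank ℝ E * ediam B * ⨍⁻ w in B, ‖fderiv ℝ f w‖ₑ ∂μ :=
        setLAverage_enorm_sub_setAverage_le μ hU hf (convex_ball x ρ) measurableSet_ball hBU h0 hT
    _ ≤ 2 ^ finrank ℝ E * ENNReal.ofReal (2 * ρ) * ((μ B)⁻¹ * (Λ * μ B ^ (1 - r⁻¹))) := by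
        rw [setLAverage_eq, ENNReal.div_eq_inv_mul]
        gcongr
        simpa only [enorm_norm] using setLIntegral_enorm_le_eLpNorm_mul_rpow
          (measurable_fderiv ℝ f).norm.aestronglyMeasurable hr
    _ = 2 ^ finrank ℝ E * (ENNReal.ofReal (2 * ρ) * μ B ^ (-r⁻¹)) * Λ := by
        rw [← hpow]
        ring
    _ = _ := by
        rw [ofReal_two_mul_mul_measure_ball_rpow μ x hρ (by positivity)]
        ring

end Haar

section Morrey

variable {n : ℕ} {U : Set (Fin n → ℝ)} {x : Fin n → ℝ} {ρ : ℝ}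

theorem ofReal_rpow_mul_eLpNorm_ball_le_morreyNorm [NeZero n] (hU : Bornology.IsBounded U)
    (hρ : 0 < ρ) (hBU : ball x ρ ⊆ U) (r lam : ℝ) (g : (Fin n → ℝ) → ℝ) :
    ENNReal.ofReal (ρ ^ (-(lam / r))) * eLpNorm g (ENNReal.ofReal r) (volume.restrict (ball x ρ))
      ≤ morreyNorm r lam U g := by
  have hdiam : ρ ≤ diam U := by
    have := diam_mono hBU hU
    rw [diam_ball_eq x hρ.le] at this
    linarith
  rw [← inter_eq_self_of_subset_left hBU]
  exact le_iSup_of_le x <| le_iSup_of_le (hBU (mem_ball_self hρ)) <|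
    le_iSup_of_le ⟨ρ, hρ, hdiam⟩ le_rfl

theorem meanOscillation_ball_le_morreyNorm_fderivWithin [NeZero n] {r : ℝ} (hr : 1 ≤ r)
    (hUo : IsOpen U) (hUb : Bornology.IsBounded U) {f : (Fin n → ℝ) → ℝ}
    (hf : DifferentiableOn ℝ f U) (hρ : 0 < ρ) (hBU : ball x ρ ⊆ U) :
    (volume (ball x ρ))⁻¹ * ∫⁻ y in ball x ρ, ENNReal.ofReal |f y - ⨍ z in ball x ρ, f z|
      ≤ 2 ^ (n + 1) * volume (ball (0 : Fin n → ℝ) 1) ^ (-r⁻¹)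
          * morreyNorm r (n - r) U (fun x => ‖fderivWithin ℝ f U x‖) := by
  have hfderiv : eLpNorm (fun w => ‖fderiv ℝ f w‖) (ENNReal.ofReal r) (volume.restrict (ball x ρ))
      = eLpNorm (fun w => ‖fderivWithin ℝ f U w‖) (ENNReal.ofReal r)
          (volume.restrict (ball x ρ)) := by
    refine eLpNorm_congr_ae (ae_restrict_of_forall_mem measurableSet_ball fun w hw => ?_)
    simp only [fderivWithin_of_isOpen hUo (hBU hw)]
  have hpoincare := setLAverage_enorm_sub_setAverage_ball_le volume hUo hf hρ hBU hr
  rw [finrank_fin_fun, hfderiv, mul_assoc _ (ENNReal.ofReal _)] at hpoincare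
  calc (volume (ball x ρ))⁻¹ * ∫⁻ y in ball x ρ, ENNReal.ofReal |f y - ⨍ z in ball x ρ, f z|
      = ⨍⁻ y in ball x ρ, ‖f y - ⨍ z in ball x ρ, f z‖ₑ ∂volume := by
        simp only [setLAverage_eq, ENNReal.div_eq_inv_mul, Real.enorm_eq_ofReal_abs]
    _ ≤ _ := hpoincare.trans <| by
        gcongr
        exact ofReal_rpow_mul_eLpNorm_ball_le_morreyNorm hUb hρ hBU r (n - r) _

end Morrey

theorem stmt_8_general (n : ℕ) (hn : 3 ≤ n) (r : ℝ) (hr2 : 2 < r)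
    (U : Set (Fin n → ℝ)) (hUopen : IsOpen U) (hUbdd : Bornology.IsBounded U) :
    ∃ C : ℝ, 0 < C ∧ ∀ f : (Fin n → ℝ) → ℝ, DifferentiableOn ℝ f U →
      bmoSeminorm U f
        ≤ ENNReal.ofReal C *
          morreyNorm r (n - r) U (fun x => ‖fderivWithin ℝ f U x‖) := by
  have : NeZero n := ⟨by omega⟩
  set V := volume (ball (0 : Fin n → ℝ) 1)
  have hV0 : 0 < V := measure_ball_pos _ _ one_pos
  have hVT : V ≠ ∞ := measure_ball_lt_top.ne
  have hVr : V ^ (-r⁻¹) ≠ ∞ := ENNReal.rpow_ne_top_of_ne_zero hV0.ne' hVT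
  refine ⟨2 ^ (n + 1) * (V ^ (-r⁻¹)).toReal,
    mul_pos (by positivity) (ENNReal.toReal_pos (ENNReal.rpow_pos hV0 hVT).ne' hVr),
    fun f hf => ?_⟩
  rw [ENNReal.ofReal_mul (by positivity), ENNReal.ofReal_toReal hVr,
    ENNReal.ofReal_pow zero_le_two, ENNReal.ofReal_ofNat]
  exact iSup₂_le fun x ρ => iSup_le fun hBU =>
    meanOscillation_ball_le_morreyNorm_fderivWithin (by linarith) hUopen hUbdd hf ρ.2 hBU

/-- **Endpoint Morrey embedding into BMO.**  On a bounded domain `U ⊆ ℝⁿ` with `n ≥ 3`,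
the Morrey–Sobolev space `L^{r,n-r}_1(U)` (functions whose gradient lies in the Morrey
space `L^{r,n-r}(U)`) with `2 < r < n` embeds continuously into `BMO(U)`: there is
`C = C(n,r,U)` with `[f]_{BMO(U)} ≤ C ‖∇f‖_{L^{r,n-r}(U)}`. -/
theorem stmt_8 (n : ℕ) (hn : 3 ≤ n) (r : ℝ) (hr2 : 2 < r) (hrn : r < n)
    (U : Set (Fin n → ℝ)) (hUopen : IsOpen U) (hUbdd : Bornology.IsBounded U) :
    ∃ C : ℝ, 0 < C ∧ ∀ f : (Fin n → ℝ) → ℝ, DifferentiableOn ℝ f U →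
      bmoSeminorm U f
        ≤ ENNReal.ofReal C *
          morreyNorm r (n - r) U (fun x => ‖fderivWithin ℝ f U x‖) :=
  stmt_8_general n hn r hr2 U hUopen hUbdd
end

section
/- (Bernoulli law ⇔ Gauss equation) With the fluid variables defined by h₁₁/√(det g) = ρv² + p, h₁₂/√(det g) = −ρuv, h₂₂/√(det g) = ρu² + p, and the Chaplygin-gas law p = −ρ⁻¹, the Gauss equation det h / det g = K is equivalent to ρ = 1/√(q² + K) where q² = u² + v², provided q² + K > 0 and ρ > 0. -/
/-!
Dividing the second fundamental form by `√(det g)` turns the Gauss equation into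
`det(h / √(det g)) = K`. For the fluid ansatz this determinant is `ρ p q² + p²`, which under the
Chaplygin law `ρ p = -1` becomes `ρ⁻² - q²`; so the Gauss equation reads `ρ⁻² = q² + K`, and for
`ρ > 0` this is `ρ = 1 / √(q² + K)`.
-/

theorem mul_sub_sq_div_eq_div_sqrt {d : ℝ} (hd : 0 ≤ d) (a b c : ℝ) :
    (a * b - c ^ 2) / d = a / √d * (b / √d) - (c / √d) ^ 2 := by
  rw [div_mul_div_comm, div_pow, ← sq, Real.sq_sqrt hd, sub_div]

theorem chaplygin_det {ρ : ℝ} (hρ : ρ ≠ 0) (u v : ℝ) :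
    (ρ * v ^ 2 + -ρ⁻¹) * (ρ * u ^ 2 + -ρ⁻¹) - (-(ρ * u * v)) ^ 2 = ρ⁻¹ ^ 2 - (u ^ 2 + v ^ 2) := by
  field_simp
  ring

theorem inv_sq_eq_iff_eq_one_div_sqrt {ρ : ℝ} (hρ : 0 < ρ) (s : ℝ) :
    ρ⁻¹ ^ 2 = s ↔ ρ = 1 / √s := by
  rw [one_div, ← inv_eq_iff_eq_inv, eq_comm (a := ρ⁻¹),
    Real.sqrt_eq_iff_mul_self_eq_of_pos (inv_pos.2 hρ), sq]

theorem stmt_12_general (h11 h12 h22 detg ρ u v p K : ℝ)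
    (hdetg : 0 < detg) (hρ : 0 < ρ)
    (hp : p = -ρ⁻¹)
    (H11 : h11 / Real.sqrt detg = ρ * v ^ 2 + p)
    (H12 : h12 / Real.sqrt detg = -(ρ * u * v))
    (H22 : h22 / Real.sqrt detg = ρ * u ^ 2 + p) :
    (h11 * h22 - h12 ^ 2) / detg = K ↔ ρ = 1 / Real.sqrt (u ^ 2 + v ^ 2 + K) := by
  rw [mul_sub_sq_div_eq_div_sqrt hdetg.le, H11, H12, H22, hp, chaplygin_det hρ.ne',
    sub_eq_iff_eq_add', inv_sq_eq_iff_eq_one_div_sqrt hρ]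

/-- **Bernoulli law ⇔ Gauss equation.**
With the fluid variables defined by `h₁₁/√(det g) = ρv² + p`, `h₁₂/√(det g) = −ρuv`,
`h₂₂/√(det g) = ρu² + p`, and the Chaplygin-gas law `p = −ρ⁻¹`, the Gauss equation
`det h / det g = K` is equivalent to `ρ = 1/√(q² + K)` where `q² = u² + v²`,
provided `q² + K > 0` and `ρ > 0`. -/
theorem stmt_12 (h11 h12 h22 detg ρ u v p K : ℝ)
    (hdetg : 0 < detg) (hρ : 0 < ρ) (hqK : 0 < u ^ 2 + v ^ 2 + K)
    (hp : p = -ρ⁻¹)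
    (H11 : h11 / Real.sqrt detg = ρ * v ^ 2 + p)
    (H12 : h12 / Real.sqrt detg = -(ρ * u * v))
    (H22 : h22 / Real.sqrt detg = ρ * u ^ 2 + p) :
    (h11 * h22 - h12 ^ 2) / detg = K ↔ ρ = 1 / Real.sqrt (u ^ 2 + v ^ 2 + K) :=
  stmt_12_general h11 h12 h22 detg ρ u v p K hdetg hρ hp H11 H12 H22
end
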